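/- Reversal formula for the one-variable W function: let λ ≤ N be nonnegative integers and set λ̄ = N - λ. Then W_{λ̄}(x; q,p,t,a,b) = (qb/a)^{2λ} · [(x^{-1};q,p)_N (ax;q,p)_N / ((qbx;q,p)_N (qb/(ax);q,p)_N)] · W_λ(bq^N x; q,p,t, a b^{-2} q^{-2N}, b^{-1} q^{-2N}), where W_μ(y) := (y^{-1};q,p)_μ (ay;q,p)_μ / [(qby;q,p)_μ (qb/(ay);q,p)_μ] with the a,b parameters indicated. -/

import Mathlib

/-!
Split every length-`N` product at `N - λ`. A tail `∏_{j<λ} E(c q^{N-λ+j}; p)` read backwards is,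
by the reflection `E(1/u; p) = -E(u; p)/u` (a consequence of `(u;p)_∞ = (1-u)(up;p)_∞`), the
product of the monomials `-c q^{N-λ+j}` and the elliptic shifted factorial of length `λ` with base
`q/(c q^N)`. For the four bases of `W_N(x)` these reflected bases are exactly the four bases of
`W_λ(b q^N x; a b⁻² q^{-2N}, b⁻¹ q^{-2N})`, numerators and denominators swapped, and the
monomials contribute `(a/(qb))^{2λ}`.
-/

noncomputable def pochInf (a p : ℂ) : ℂ := ∏' i : ℕ, (1 - a * p ^ i)

noncomputable def ellE (x p : ℂ) : ℂ := pochInf x p * pochInf (p / x) p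

noncomputable def epoch (a q p : ℂ) (m : ℕ) : ℂ :=
  ∏ k ∈ Finset.range m, ellE (a * q ^ k) p

/-- The one-variable `W` function with parameters `a`, `b`. -/
noncomputable def W1 (x q p a b : ℂ) (m : ℕ) : ℂ :=
  epoch x⁻¹ q p m * epoch (a * x) q p m /
    (epoch (q * b * x) q p m * epoch (q * b / (a * x)) q p m)

lemma multipliable_one_sub_mul_geometric (u : ℂ) {p : ℂ} (hp : ‖p‖ < 1) :
    Multipliable fun i : ℕ => 1 - u * p ^ i := by
  simpa [sub_eq_add_neg] using multipliable_one_add_of_summable (f := fun i : ℕ => -(u * p ^ i))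
    (by simpa using (summable_geometric_of_lt_one (norm_nonneg p) hp).mul_left ‖u‖)

lemma pochInf_eq_one_sub_mul (u : ℂ) {p : ℂ} (hp : ‖p‖ < 1) :
    pochInf u p = (1 - u) * pochInf (u * p) p := by
  have hshift : Multipliable fun i : ℕ => 1 - u * p ^ (i + 1) := by
    simpa only [pow_succ', mul_assoc] using multipliable_one_sub_mul_geometric (u * p) hp
  rw [pochInf, tprod_eq_zero_mul' (f := fun i : ℕ => 1 - u * p ^ i) hshift, pochInf]
  simp only [pow_zero, mul_one, pow_succ', mul_assoc]

lemma ellE_inv {p : ℂ} (hp : ‖p‖ < 1) {u : ℂ} (hu : u ≠ 0) :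
    ellE u⁻¹ p = -u⁻¹ * ellE u p := by
  rw [ellE, ellE, pochInf_eq_one_sub_mul u⁻¹ hp, pochInf_eq_one_sub_mul u hp,
    div_inv_eq_mul, div_eq_inv_mul]
  field_simp
  ring

lemma epoch_add (c q p : ℂ) (m n : ℕ) :
    epoch c q p (m + n) = epoch c q p m * epoch (c * q ^ m) q p n := by
  simp only [epoch, Finset.prod_range_add, pow_add, mul_assoc]

lemma epoch_eq_prod_mul_epoch_reflect {p : ℂ} (hp : ‖p‖ < 1) {c q : ℂ} (hc : c ≠ 0) (hq : q ≠ 0)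
    (n : ℕ) :
    epoch c q p n = (∏ k ∈ Finset.range n, -(c * q ^ k)) * epoch (q / (c * q ^ n)) q p n := by
  rw [epoch, epoch, ← Finset.prod_range_reflect (fun k => ellE (q / (c * q ^ n) * q ^ k) p) n,
    ← Finset.prod_mul_distrib]
  refine Finset.prod_congr rfl fun k hk => ?_
  have hck : c * q ^ k ≠ 0 := mul_ne_zero hc (pow_ne_zero k hq)
  have hqn : q ^ n = q ^ k * q ^ (n - 1 - k) * q := by
    rw [← pow_add, ← pow_succ]
    have := Finset.mem_range.mp hk
    congr 1
    omega
  have hreflect : q / (c * q ^ n) * q ^ (n - 1 - k) = (c * q ^ k)⁻¹ := by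
    rw [hqn]
    field_simp
  rw [hreflect, ellE_inv hp hck]
  field_simp

lemma epoch_add_eq_mul_reflect {p : ℂ} (hp : ‖p‖ < 1) {c q : ℂ} (hc : c ≠ 0) (hq : q ≠ 0)
    (m n : ℕ) :
    epoch c q p (m + n) = epoch c q p m * (∏ k ∈ Finset.range n, -(c * q ^ m * q ^ k)) *
      epoch (q / (c * q ^ (m + n))) q p n := by
  rw [epoch_add, epoch_eq_prod_mul_epoch_reflect hp (mul_ne_zero hc (pow_ne_zero m hq)) hq,
    mul_assoc, mul_assoc, ← pow_add]

lemma prod_range_neg_mul_pow_div (q c d e f : ℂ) (hq : q ≠ 0) (he : e ≠ 0) (hf : f ≠ 0) (n : ℕ) :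
    (∏ k ∈ Finset.range n, -(c * q ^ k)) * (∏ k ∈ Finset.range n, -(d * q ^ k)) /
      ((∏ k ∈ Finset.range n, -(e * q ^ k)) * ∏ k ∈ Finset.range n, -(f * q ^ k)) =
      (c * d / (e * f)) ^ n := by
  rw [← Finset.prod_mul_distrib, ← Finset.prod_mul_distrib, ← Finset.prod_div_distrib,
    ← Finset.card_range n, ← Finset.prod_const, Finset.card_range]
  refine Finset.prod_congr rfl fun k _ => ?_
  have hqk : q ^ k ≠ 0 := pow_ne_zero k hq
  field_simp

lemma W1_add {p : ℂ} (hp : ‖p‖ < 1) {x q a b : ℂ} (hx : x ≠ 0) (hq : q ≠ 0) (ha : a ≠ 0)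
    (hb : b ≠ 0) (m n : ℕ) :
    W1 x q p a b (m + n) = W1 x q p a b m / ((q * b / a) ^ (2 * n) *
      (epoch (q / (q * b * x * q ^ (m + n))) q p n *
          epoch (q / (q * b / (a * x) * q ^ (m + n))) q p n /
        (epoch (q / (x⁻¹ * q ^ (m + n))) q p n * epoch (q / (a * x * q ^ (m + n))) q p n))) := by
  have hax : a * x ≠ 0 := mul_ne_zero ha hx
  have hqbx : q * b * x ≠ 0 := mul_ne_zero (mul_ne_zero hq hb) hx
  have hqbax : q * b / (a * x) ≠ 0 := div_ne_zero (mul_ne_zero hq hb) hax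
  have hqm : q ^ m ≠ 0 := pow_ne_zero m hq
  have hsign := prod_range_neg_mul_pow_div q (x⁻¹ * q ^ m) (a * x * q ^ m) (q * b * x * q ^ m)
    (q * b / (a * x) * q ^ m) hq (mul_ne_zero hqbx hqm) (mul_ne_zero hqbax hqm) n
  rw [show x⁻¹ * q ^ m * (a * x * q ^ m) / (q * b * x * q ^ m * (q * b / (a * x) * q ^ m)) =
      ((q * b / a) ^ 2)⁻¹ by field_simp, inv_pow, ← pow_mul] at hsign
  rw [W1, W1, epoch_add_eq_mul_reflect hp (inv_ne_zero hx) hq,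
    epoch_add_eq_mul_reflect hp hax hq, epoch_add_eq_mul_reflect hp hqbx hq,
    epoch_add_eq_mul_reflect hp hqbax hq, ← inv_inv ((q * b / a) ^ (2 * n)), ← hsign]
  simp only [div_eq_mul_inv, mul_inv, inv_inv]
  ring

lemma epoch_reflect_ne_zero {p : ℂ} (hp : ‖p‖ < 1) {c q : ℂ} (hc : c ≠ 0) (hq : q ≠ 0)
    {n N : ℕ} (hn : n ≤ N) (h : epoch c q p N ≠ 0) : epoch (q / (c * q ^ N)) q p n ≠ 0 := by
  obtain ⟨m, rfl⟩ := Nat.exists_eq_add_of_le' hn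
  rw [epoch_add_eq_mul_reflect hp hc hq] at h
  exact right_ne_zero_of_mul h

theorem W1_reversal_general (x q p a b : ℂ) (lam N : ℕ) (hlam : lam ≤ N)
    (hp : ‖p‖ < 1)
    (hx : x ≠ 0) (hq : q ≠ 0) (ha : a ≠ 0) (hb : b ≠ 0)
    (hd1 : epoch (q * b * x) q p N ≠ 0)
    (hd2 : epoch (q * b / (a * x)) q p N ≠ 0)
    (hd5 : epoch (q * (b⁻¹ * q ^ (-(2 * N : ℤ))) * (b * q ^ N * x)) q p lam ≠ 0)
    (hd6 : epoch (q * (b⁻¹ * q ^ (-(2 * N : ℤ))) /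
      (a * b ^ (-2 : ℤ) * q ^ (-(2 * N : ℤ)) * (b * q ^ N * x))) q p lam ≠ 0) :
    W1 x q p a b (N - lam) =
      (q * b / a) ^ (2 * lam) *
        (epoch x⁻¹ q p N * epoch (a * x) q p N /
          (epoch (q * b * x) q p N * epoch (q * b / (a * x)) q p N)) *
        W1 (b * q ^ N * x) q p (a * b ^ (-2 : ℤ) * q ^ (-(2 * N : ℤ)))
          (b⁻¹ * q ^ (-(2 * N : ℤ))) lam := by
  have hq2N : q ^ (-(2 * N : ℤ)) = ((q ^ N) ^ 2)⁻¹ := by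
    rw [zpow_neg, ← pow_mul, mul_comm, ← zpow_natCast]
    push_cast
    rfl
  have hb2 : b ^ (-2 : ℤ) = (b ^ 2)⁻¹ := by rw [zpow_neg]; norm_cast
  have e1 : q / (x⁻¹ * q ^ N) = q * (b⁻¹ * q ^ (-(2 * N : ℤ))) * (b * q ^ N * x) := by
    rw [hq2N]; field_simp
  have e2 : q / (a * x * q ^ N) = q * (b⁻¹ * q ^ (-(2 * N : ℤ))) /
      (a * b ^ (-2 : ℤ) * q ^ (-(2 * N : ℤ)) * (b * q ^ N * x)) := by
    rw [hq2N, hb2]; field_simp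
  have e3 : q / (q * b * x * q ^ N) = (b * q ^ N * x)⁻¹ := by field_simp
  have e4 : q / (q * b / (a * x) * q ^ N) =
      a * b ^ (-2 : ℤ) * q ^ (-(2 * N : ℤ)) * (b * q ^ N * x) := by
    rw [hq2N, hb2]; field_simp
  have hnum1 := epoch_reflect_ne_zero hp (mul_ne_zero (mul_ne_zero hq hb) hx) hq hlam hd1
  have hnum2 := epoch_reflect_ne_zero hp (div_ne_zero (mul_ne_zero hq hb) (mul_ne_zero ha hx)) hq
    hlam hd2
  rw [e3] at hnum1
  rw [e4] at hnum2
  have hWy := div_ne_zero (mul_ne_zero hnum1 hnum2) (mul_ne_zero hd5 hd6)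
  rw [← W1.eq_1] at hWy
  have hadd := W1_add hp hx hq ha hb (N - lam) lam
  rw [Nat.sub_add_cancel hlam, e1, e2, e3, e4, ← W1.eq_1] at hadd
  have hk : (q * b / a) ^ (2 * lam) ≠ 0 := pow_ne_zero _ (div_ne_zero (mul_ne_zero hq hb) ha)
  rw [← W1.eq_1, hadd, mul_div_assoc', mul_div_mul_left _ _ hk, div_mul_cancel₀ _ hWy]

theorem W1_reversal (x q p t a b : ℂ) (lam N : ℕ) (hlam : lam ≤ N)
    (hp : ‖p‖ < 1)
    (hx : x ≠ 0) (hq : q ≠ 0) (ha : a ≠ 0) (hb : b ≠ 0)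
    (hd1 : epoch (q * b * x) q p N ≠ 0)
    (hd2 : epoch (q * b / (a * x)) q p N ≠ 0)
    (hd3 : epoch (q * b * x) q p (N - lam) ≠ 0)
    (hd4 : epoch (q * b / (a * x)) q p (N - lam) ≠ 0)
    (hd5 : epoch (q * (b⁻¹ * q ^ (-(2 * N : ℤ))) * (b * q ^ N * x)) q p lam ≠ 0)
    (hd6 : epoch (q * (b⁻¹ * q ^ (-(2 * N : ℤ))) /
      (a * b ^ (-2 : ℤ) * q ^ (-(2 * N : ℤ)) * (b * q ^ N * x))) q p lam ≠ 0) :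
    W1 x q p a b (N - lam) =
      (q * b / a) ^ (2 * lam) *
        (epoch x⁻¹ q p N * epoch (a * x) q p N /
          (epoch (q * b * x) q p N * epoch (q * b / (a * x)) q p N)) *
        W1 (b * q ^ N * x) q p (a * b ^ (-2 : ℤ) * q ^ (-(2 * N : ℤ)))
          (b⁻¹ * q ^ (-(2 * N : ℤ))) lam :=
  W1_reversal_general x q p a b lam N hlam hp hx hq ha hb hd1 hd2 hd5 hd6
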